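/- arXiv:1006.5340 — 3 statements merged into one kernel-verified Lean document; each statement's English description precedes it below -/
import Mathlib

section
/- Let R, r > 0 and let u, f, g : ℝ → ℝ be functions such that u is twice continuously differentiable on an open set containing the closed interval [-(R+r), R+r] and f, g are continuous on [-(R+r), R+r]. Assume that for every t ∈ [-(R+r), R+r] one has f(t) ≤ g(t) + u''(t), u(t) ≥ 0, f(t) ≥ 0 and g(t) ≥ 0. Then ∫_{-R}^{R} f(t) dt ≤ ∫_{-(R+r)}^{R+r} g(t) dt + (4/r²)·( ∫_{-(R+r)}^{-R} u(t) dt + ∫_{R}^{R+r} u(t) dt ). -/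
/-!
Integrating `f ≤ g + u''` between `a ∈ [-(R+r), -R]` and `b ∈ [R, R+r]` and using `f, g ≥ 0`
gives `C ≤ u'(b) - u'(a)` with `C = ∫_{-R}^{R} f - ∫_{-(R+r)}^{R+r} g`. Hence for each
fixed `a` the slope of `u` on `[R, R+r]` is at least `C + u'(a)`, and a nonnegative function
whose slope on an interval of length `r` is at least `c` has integral at least `c r² / 4`
there. This bounds `u'(a)` from above on `[-(R+r), -R]`, and the mirror-image estimate on
that interval finishes.
-/

open Set MeasureTheory intervalIntegral

theorem integral_le_integral_of_subinterval {f : ℝ → ℝ} {a b c d : ℝ}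
    (hca : c ≤ a) (hab : a ≤ b) (hbd : b ≤ d) (hf : ContinuousOn f (Icc c d))
    (hf0 : ∀ t ∈ Icc c d, 0 ≤ f t) :
    ∫ t in a..b, f t ≤ ∫ t in c..d, f t :=
  integral_mono_interval hca hab hbd
    (ae_restrict_of_forall_mem measurableSet_Ioc fun t ht => hf0 t (Ioc_subset_Icc_self ht))
    (hf.intervalIntegrable_of_Icc (hca.trans (hab.trans hbd)))

theorem integral_le_integral_add_sub_of_le_add_deriv {f g w w' : ℝ → ℝ} {a b : ℝ}
    (hab : a ≤ b) (hf : IntervalIntegrable f volume a b) (hg : IntervalIntegrable g volume a b)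
    (hw : ∀ t ∈ Icc a b, HasDerivAt w (w' t) t) (hw' : IntervalIntegrable w' volume a b)
    (hfg : ∀ t ∈ Icc a b, f t ≤ g t + w' t) :
    ∫ t in a..b, f t ≤ (∫ t in a..b, g t) + (w b - w a) := by
  calc ∫ t in a..b, f t ≤ ∫ t in a..b, (g t + w' t) :=
        integral_mono_on hab hf (hg.add hw') hfg
    _ = (∫ t in a..b, g t) + (w b - w a) := by
      rw [integral_add hg hw', integral_eq_sub_of_hasDerivAt (by rwa [uIcc_of_le hab]) hw']

theorem integral_sub_integral_le_sub_of_le_add_deriv {f g w w' : ℝ → ℝ} {A a c d b B : ℝ}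
    (hAa : A ≤ a) (hac : a ≤ c) (hcd : c ≤ d) (hdb : d ≤ b) (hbB : b ≤ B)
    (hf : ContinuousOn f (Icc a b)) (hf0 : ∀ t ∈ Icc a b, 0 ≤ f t)
    (hg : ContinuousOn g (Icc A B)) (hg0 : ∀ t ∈ Icc A B, 0 ≤ g t)
    (hw : ∀ t ∈ Icc a b, HasDerivAt w (w' t) t) (hw' : ContinuousOn w' (Icc a b))
    (hfg : ∀ t ∈ Icc a b, f t ≤ g t + w' t) :
    (∫ t in c..d, f t) - ∫ t in A..B, g t ≤ w b - w a := by
  have hab : a ≤ b := hac.trans (hcd.trans hdb)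
  have hfI := integral_le_integral_of_subinterval hac hcd hdb hf hf0
  have hfg_ab := integral_le_integral_add_sub_of_le_add_deriv hab
    (hf.intervalIntegrable_of_Icc hab)
    ((hg.mono (Icc_subset_Icc hAa hbB)).intervalIntegrable_of_Icc hab) hw
    (hw'.intervalIntegrable_of_Icc hab) hfg
  have hgI := integral_le_integral_of_subinterval hAa hab hbB hg hg0
  linarith

theorem le_four_div_sq_mul_integral_of_le_deriv {v v' : ℝ → ℝ} {a b c : ℝ} (hab : a < b)
    (hv : ∀ t ∈ Icc a b, HasDerivAt v (v' t) t) (hv0 : ∀ t ∈ Icc a b, 0 ≤ v t)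
    (hc : ∀ t ∈ Icc a b, c ≤ v' t) :
    c ≤ 4 / (b - a) ^ 2 * ∫ t in a..b, v t := by
  set h := (b - a) / 2 with h_def
  have hh : 0 < h := by positivity
  have hb : b = a + h + h := by ring
  have hvc : ContinuousOn v (Icc a b) := fun t ht => (hv t ht).continuousAt.continuousWithinAt
  have hslope : ∀ s ∈ Icc a (a + h), c * h ≤ v (s + h) - v s := by
    intro s hs
    have hmvt := (convex_Icc a b).mul_sub_le_image_sub_of_le_deriv hvc
      (fun t ht => (hv t (interior_subset ht)).differentiableAt.differentiableWithinAt)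
      (fun t ht => (hv t (interior_subset ht)).deriv ▸ hc t (interior_subset ht))
      s ⟨hs.1, by linarith [hs.2]⟩ (s + h) ⟨by linarith [hs.1], by linarith [hs.2]⟩
      (by linarith)
    rwa [add_sub_cancel_left] at hmvt
  have hv₁ : ContinuousOn v (Icc a (a + h)) := hvc.mono (Icc_subset_Icc le_rfl (by linarith))
  have hv₂ : ContinuousOn v (Icc (a + h) b) := hvc.mono (Icc_subset_Icc (by linarith) le_rfl)
  have hv₂' : ContinuousOn (fun s => v (s + h)) (Icc a (a + h)) :=
    hv₂.comp (continuous_add_const h).continuousOn fun s hs =>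
      ⟨by linarith [hs.1], by linarith [hs.2]⟩
  have hshift : ∫ t in a + h..b, v t = ∫ s in a..a + h, v (s + h) := by
    rw [integral_comp_add_right, ← hb]
  -- pairing `s ∈ [a, a+h]` with `s + h ∈ [a+h, b]`, the right half outweighs the left
  have hgain : c * h ^ 2 ≤ (∫ t in a + h..b, v t) - ∫ t in a..a + h, v t := by
    rw [hshift, ← integral_sub (hv₂'.intervalIntegrable_of_Icc (by linarith))
      (hv₁.intervalIntegrable_of_Icc (by linarith))]
    calc c * h ^ 2 = ∫ _ in a..a + h, c * h := by
          simp only [intervalIntegral.integral_const, smul_eq_mul]; ring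
      _ ≤ _ := integral_mono_on (by linarith) intervalIntegrable_const
          ((hv₂'.sub hv₁).intervalIntegrable_of_Icc (by linarith)) hslope
  have hsplit : (∫ t in a..a + h, v t) + (∫ t in a + h..b, v t) = ∫ t in a..b, v t :=
    integral_add_adjacent_intervals (hv₁.intervalIntegrable_of_Icc (by linarith))
    (hv₂.intervalIntegrable_of_Icc (by linarith))
  have hleft : 0 ≤ ∫ t in a..a + h, v t :=
    integral_nonneg (by linarith) fun t ht => hv0 t ⟨ht.1, by linarith [ht.2]⟩
  calc c = 4 / (b - a) ^ 2 * (c * h ^ 2) := by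
        rw [h_def]; field_simp [(sub_pos.2 hab).ne']; ring
    _ ≤ 4 / (b - a) ^ 2 * ∫ t in a..b, v t := by gcongr; linarith

theorem le_four_div_sq_mul_integral_of_deriv_le_neg {v v' : ℝ → ℝ} {a b c : ℝ} (hab : a < b)
    (hv : ∀ t ∈ Icc a b, HasDerivAt v (v' t) t) (hv0 : ∀ t ∈ Icc a b, 0 ≤ v t)
    (hc : ∀ t ∈ Icc a b, v' t ≤ -c) :
    c ≤ 4 / (b - a) ^ 2 * ∫ t in a..b, v t := by
  have hneg : ∀ t ∈ Icc (-b) (-a), -t ∈ Icc a b := fun t ht =>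
    ⟨by linarith [ht.2], by linarith [ht.1]⟩
  have hreflect := le_four_div_sq_mul_integral_of_le_deriv (v := fun t => v (-t))
    (v' := fun t => -v' (-t)) (c := c) (neg_lt_neg hab)
    (fun t ht => by
      simpa [Function.comp_def] using (hv (-t) (hneg t ht)).scomp t (hasDerivAt_neg t))
    (fun t ht => hv0 (-t) (hneg t ht)) (fun t ht => by linarith [hc (-t) (hneg t ht)])
  rwa [integral_comp_neg, neg_neg, neg_neg, neg_sub_neg] at hreflect

/-- One-dimensional integrated mean-value inequality (lemma on differential
inequalities): if `f ≤ g + u''`, `u ≥ 0`, `f ≥ 0`, `g ≥ 0` on `[-(R+r), R+r]`,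
then `∫_{-R}^{R} f ≤ ∫_{-(R+r)}^{R+r} g + (4/r²)(∫_{-(R+r)}^{-R} u + ∫_{R}^{R+r} u)`. -/
theorem integrated_mean_value_inequality
    (R r : ℝ) (hR : 0 < R) (hr : 0 < r)
    (u f g : ℝ → ℝ)
    (hu : ∃ s : Set ℝ, IsOpen s ∧ Set.Icc (-(R + r)) (R + r) ⊆ s ∧ ContDiffOn ℝ 2 u s)
    (hf : ContinuousOn f (Set.Icc (-(R + r)) (R + r)))
    (hg : ContinuousOn g (Set.Icc (-(R + r)) (R + r)))
    (hfg : ∀ t ∈ Set.Icc (-(R + r)) (R + r), f t ≤ g t + deriv (deriv u) t)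
    (hu0 : ∀ t ∈ Set.Icc (-(R + r)) (R + r), 0 ≤ u t)
    (hf0 : ∀ t ∈ Set.Icc (-(R + r)) (R + r), 0 ≤ f t)
    (hg0 : ∀ t ∈ Set.Icc (-(R + r)) (R + r), 0 ≤ g t) :
    (∫ t in (-R)..R, f t) ≤
      (∫ t in (-(R + r))..(R + r), g t) +
        (4 / r ^ 2) * ((∫ t in (-(R + r))..(-R), u t) + ∫ t in R..(R + r), u t) := by
  obtain ⟨s, hs, hIs, hu⟩ := hu
  have hu₁ : ContDiffOn ℝ 1 (deriv u) s := hu.deriv_of_isOpen hs (by norm_num)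
  have hu' : ∀ t ∈ s, HasDerivAt u (deriv u t) t := fun t ht =>
    ((hu.contDiffAt (hs.mem_nhds ht)).differentiableAt (by norm_num)).hasDerivAt
  have hu'' : ∀ t ∈ s, HasDerivAt (deriv u) (deriv (deriv u) t) t := fun t ht =>
    ((hu₁.contDiffAt (hs.mem_nhds ht)).differentiableAt one_ne_zero).hasDerivAt
  have hu''c : ContinuousOn (deriv (deriv u)) s := hu₁.continuousOn_deriv_of_isOpen hs le_rfl
  set C := (∫ t in (-R)..R, f t) - ∫ t in (-(R + r))..(R + r), g t
  set B := 4 / r ^ 2 * ∫ t in R..(R + r), u t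
  have hslope :
      ∀ a ∈ Icc (-(R + r)) (-R), ∀ b ∈ Icc R (R + r), C ≤ deriv u b - deriv u a := by
    intro a ha b hb
    have hI : Icc a b ⊆ Icc (-(R + r)) (R + r) := Icc_subset_Icc ha.1 hb.2
    exact integral_sub_integral_le_sub_of_le_add_deriv ha.1 ha.2 (by linarith) hb.1 hb.2
      (hf.mono hI) (fun t ht => hf0 t (hI ht)) hg hg0 (fun t ht => hu'' t (hIs (hI ht)))
      (hu''c.mono (hI.trans hIs)) fun t ht => hfg t (hI ht)
  have hright : ∀ a ∈ Icc (-(R + r)) (-R), C + deriv u a ≤ B := fun a ha => by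
    have hI : Icc R (R + r) ⊆ Icc (-(R + r)) (R + r) := Icc_subset_Icc (by linarith) le_rfl
    simpa only [B, add_sub_cancel_left] using le_four_div_sq_mul_integral_of_le_deriv
      (by linarith) (fun t ht => hu' t (hIs (hI ht))) (fun t ht => hu0 t (hI ht))
      fun t ht => by linarith [hslope a ha t ht]
  have hleft : C - B ≤ 4 / r ^ 2 * ∫ t in (-(R + r))..(-R), u t := by
    have hI : Icc (-(R + r)) (-R) ⊆ Icc (-(R + r)) (R + r) := Icc_subset_Icc le_rfl (by linarith)
    have hbound := le_four_div_sq_mul_integral_of_deriv_le_neg (c := C - B) (by linarith)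
      (fun t ht => hu' t (hIs (hI ht))) (fun t ht => hu0 t (hI ht))
      fun t ht => by linarith [hright t ht]
    rwa [show -R - -(R + r) = r by ring] at hbound
  rw [mul_add]
  linarith
end

section
/- Let c ≥ 0 and let u : ℝ → ℝ be twice continuously differentiable, 1-periodic (u(t+1) = u(t) for all t), with u(t) ≥ 0 and u''(t) ≥ -c·u(t) for every t ∈ ℝ. Then sup_{t ∈ ℝ} u(t) ≤ 4·(c + 8)·∫_0^1 u(t) dt. -/
/-!
Let `u` attain its maximum `M` at `t₀`. There `u'' ≥ -c u ≥ -c M`, so `u t + c M (t - t₀)² / 2`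
is convex with a critical point at `t₀`, whence `u t ≥ M - c M (t - t₀)² / 2`. Integrating this
over `[t₀ - r, t₀ + r]` gives `M (2r - c r³/3) ≤ ∫₀¹ u` as long as `2r ≤ 1`; the choice
`r = 1 / (c + 8)` makes `c r² ≤ 1`, hence `M ≤ (c + 8) ∫₀¹ u`.
-/

open Set intervalIntegral MeasureTheory

theorem Function.Periodic.exists_forall_le_of_continuous {α : Type*} [LinearOrder α]
    [TopologicalSpace α] [ClosedIciTopology α] {f : ℝ → α} {T : ℝ} (hf : Periodic f T)
    (hT : T ≠ 0) (hcont : Continuous f) : ∃ x₀, ∀ x, f x ≤ f x₀ := by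
  obtain ⟨_, ⟨x₀, rfl⟩, hx₀⟩ :=
    (hf.compact_of_continuous hT hcont).exists_isGreatest (range_nonempty f)
  exact ⟨x₀, fun x => hx₀ ⟨x, rfl⟩⟩

theorem Function.Periodic.intervalIntegral_le_of_nonneg {u : ℝ → ℝ} {T a b : ℝ}
    (hper : Periodic u T) (hint : IntervalIntegrable u volume a (a + T)) (h0 : ∀ t, 0 ≤ u t)
    (hab : a ≤ b) (hb : b ≤ a + T) : ∫ t in a..b, u t ≤ ∫ t in 0..T, u t :=
  (integral_mono_interval le_rfl hab hb (ae_of_all _ h0) hint).trans_eq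
    (by simpa using hper.intervalIntegral_add_eq a 0)

theorem sub_mul_sq_le_of_deriv2_ge {f : ℝ → ℝ} {K x₀ : ℝ}
    (hf : Differentiable ℝ f) (hf' : Differentiable ℝ (deriv f))
    (hf'' : ∀ x, -K ≤ deriv (deriv f) x) (hx₀ : deriv f x₀ = 0) (x : ℝ) :
    f x₀ - K / 2 * (x - x₀) ^ 2 ≤ f x := by
  set g : ℝ → ℝ := fun x => f x + K / 2 * (x - x₀) ^ 2
  have hg : ∀ x, HasDerivAt g (deriv f x + K * (x - x₀)) x := fun x =>
    ((hf x).hasDerivAt.add ((((hasDerivAt_id x).sub_const x₀).pow 2).const_mul (K / 2))).congr_deriv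
      (by simp; ring)
  have hg' : ∀ x, HasDerivAt (deriv g) (deriv (deriv f) x + K) x := fun x => by
    rw [show deriv g = fun x => deriv f x + K * (x - x₀) from funext fun x => (hg x).deriv]
    exact ((hf' x).hasDerivAt.add (((hasDerivAt_id x).sub_const x₀).const_mul K)).congr_deriv
      (by simp)
  have hconvex : ConvexOn ℝ univ g :=
    convexOn_univ_of_deriv2_nonneg (fun x => (hg x).differentiableAt)
      (fun x => (hg' x).differentiableAt) fun x => by
        rw [Function.iterate_succ_apply, Function.iterate_one, (hg' x).deriv]
        linarith [hf'' x]
  have hmin : IsMinOn g univ x₀ := hconvex.isMinOn_of_rightDeriv_eq_zero (by simp) <| by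
    rw [(hg x₀).hasDerivWithinAt.derivWithin (uniqueDiffWithinAt_Ioi x₀), hx₀]
    simp
  have hgx : g x₀ ≤ g x := hmin (mem_univ x)
  norm_num [g] at hgx
  linarith

theorem integral_sub_mul_sq_sub (M K x₀ r : ℝ) :
    ∫ x in (x₀ - r)..(x₀ + r), (M - K / 2 * (x - x₀) ^ 2) = 2 * r * M - K * r ^ 3 / 3 := by
  rw [integral_sub intervalIntegrable_const (by apply Continuous.intervalIntegrable; fun_prop),
    intervalIntegral.integral_const, intervalIntegral.integral_const_mul,
    integral_comp_sub_right (fun x => x ^ 2), integral_pow]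
  simp only [smul_eq_mul]
  ring

theorem mul_le_integral_of_forall_le_of_deriv2_ge {u : ℝ → ℝ} {c t₀ r : ℝ} (hc : 0 ≤ c)
    (hu : Differentiable ℝ u) (hu' : Differentiable ℝ (deriv u))
    (hu'' : ∀ t, -c * u t ≤ deriv (deriv u) t) (hmax : ∀ t, u t ≤ u t₀) (hr : 0 ≤ r) :
    u t₀ * (2 * r - c * r ^ 3 / 3) ≤ ∫ t in (t₀ - r)..(t₀ + r), u t := by
  have hcrit : deriv u t₀ = 0 := IsLocalMax.deriv_eq_zero (Filter.Eventually.of_forall hmax)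
  have hlower := sub_mul_sq_le_of_deriv2_ge (K := c * u t₀) hu hu'
    (fun t => by nlinarith [hu'' t, hmax t]) hcrit
  calc u t₀ * (2 * r - c * r ^ 3 / 3)
      = ∫ t in (t₀ - r)..(t₀ + r), (u t₀ - c * u t₀ / 2 * (t - t₀) ^ 2) := by
        rw [integral_sub_mul_sq_sub]; ring
    _ ≤ ∫ t in (t₀ - r)..(t₀ + r), u t :=
        integral_mono_on (by linarith) (by apply Continuous.intervalIntegrable; fun_prop)
          (hu.continuous.intervalIntegrable _ _) fun t _ => hlower t

/-- Periodic mean-value inequality for nonnegative subsolutions of `u'' + c·u ≥ 0`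
on the circle `S¹ = ℝ/ℤ`: `sup u ≤ 4·(c + 8)·∫_0^1 u`. -/
theorem periodic_mean_value_inequality_subsolution
    (c : ℝ) (hc : 0 ≤ c) (u : ℝ → ℝ)
    (hu : ContDiff ℝ 2 u) (hper : Function.Periodic u 1)
    (hu0 : ∀ t, 0 ≤ u t)
    (hu'' : ∀ t, -c * u t ≤ deriv (deriv u) t) :
    (⨆ t, u t) ≤ 4 * (c + 8) * ∫ t in (0 : ℝ)..1, u t := by
  obtain ⟨t₀, hmax⟩ := hper.exists_forall_le_of_continuous one_ne_zero hu.continuous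
  set I := ∫ t in (0 : ℝ)..1, u t
  set r := (c + 8)⁻¹
  have hr : 0 < r := by positivity
  have hrc : (c + 8) * r = 1 := mul_inv_cancel₀ (by positivity)
  have hr_le : r ≤ 2 * r - c * r ^ 3 / 3 := by
    have hcr : c * r ≤ 1 := by linarith
    have hr1 : r ≤ 1 := by nlinarith
    nlinarith [mul_le_mul hcr hr1 hr.le zero_le_one, mul_pos hr hr]
  have hlocal := mul_le_integral_of_forall_le_of_deriv2_ge hc (hu.differentiable two_ne_zero)
    hu.differentiable_deriv_two hu'' hmax hr.le
  have hperiod : ∫ t in (t₀ - r)..(t₀ + r), u t ≤ I :=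
    hper.intervalIntegral_le_of_nonneg (hu.continuous.intervalIntegrable _ _) hu0
      (by linarith) (by nlinarith)
  have hM : u t₀ * r ≤ I :=
    ((mul_le_mul_of_nonneg_left hr_le (hu0 t₀)).trans hlocal).trans hperiod
  have hI : 0 ≤ I := integral_nonneg zero_le_one fun t _ => hu0 t
  refine ciSup_le fun t => ?_
  calc u t ≤ u t₀ := hmax t
    _ = (c + 8) * (u t₀ * r) := by rw [mul_left_comm, hrc, mul_one]
    _ ≤ (c + 8) * I := by gcongr
    _ ≤ 4 * (c + 8) * I := by nlinarith
end

section
/- Let H be a real Hilbert space, let p ∈ ℝ with p ≥ 2, and let ξ : ℝ → H be twice continuously differentiable, 1-periodic (ξ(t+1) = ξ(t) for all t), and nowhere vanishing (ξ(t) ≠ 0 for all t). Then ∫_0^1 ‖ξ(t)‖^{p-2}·‖ξ'(t)‖² dt ≤ ( ∫_0^1 ‖ξ(t)‖^p dt )^{(p-1)/p} · ( ∫_0^1 ‖ξ''(t)‖^p dt )^{1/p}. -/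
/-!
Differentiating `g = ‖ξ‖^(p-2) ⟪ξ, ξ'⟫` gives
`g' = ‖ξ‖^(p-2) ‖ξ'‖² + (p-2) ‖ξ‖^(p-4) ⟪ξ, ξ'⟫² + ‖ξ‖^(p-2) ⟪ξ, ξ''⟫`, and `∫₀¹ g' = 0` by
periodicity. For `p ≥ 2` the middle term is nonnegative, so `∫ ‖ξ‖^(p-2) ‖ξ'‖²` is at most
`-∫ ‖ξ‖^(p-2) ⟪ξ, ξ''⟫ ≤ ∫ ‖ξ‖^(p-1) ‖ξ''‖` by Cauchy–Schwarz, and Hölder's inequality with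
exponents `p / (p - 1)` and `p` finishes the proof.
-/

open scoped RealInnerProductSpace
open MeasureTheory intervalIntegral

theorem Function.Periodic.deriv {𝕜 F : Type*} [NontriviallyNormedField 𝕜] [NormedAddCommGroup F]
    [NormedSpace 𝕜 F] {f : 𝕜 → F} {c : 𝕜} (hf : Function.Periodic f c) :
    Function.Periodic (deriv f) c := fun x => by
  rw [← deriv_comp_add_const, show (fun s => f (s + c)) = f from funext hf]

theorem Continuous.memLp_restrict_Ioc {f : ℝ → ℝ} (hf : Continuous f) (a b : ℝ)
    (q : ENNReal) : MemLp f q (volume.restrict (Set.Ioc a b)) := by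
  obtain ⟨C, hC⟩ := (isCompact_Icc (a := a) (b := b)).exists_bound_of_continuousOn hf.continuousOn
  refine MemLp.of_bound hf.aestronglyMeasurable C ?_
  rw [ae_restrict_iff' measurableSet_Ioc]
  exact Filter.Eventually.of_forall fun t ht => hC t (Set.Ioc_subset_Icc_self ht)

theorem intervalIntegral.integral_mul_le_Lp_mul_Lq_of_nonneg {a b p q : ℝ} (hab : a ≤ b)
    (hpq : p.HolderConjugate q) {f g : ℝ → ℝ} (hf : Continuous f) (hg : Continuous g)
    (hf₀ : 0 ≤ f) (hg₀ : 0 ≤ g) :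
    ∫ t in a..b, f t * g t ≤ (∫ t in a..b, f t ^ p) ^ (1 / p) * (∫ t in a..b, g t ^ q) ^ (1 / q) := by
  simp only [integral_of_le hab]
  exact MeasureTheory.integral_mul_le_Lp_mul_Lq_of_nonneg hpq (.of_forall hf₀) (.of_forall hg₀)
    (hf.memLp_restrict_Ioc a b _) (hg.memLp_restrict_Ioc a b _)

theorem intervalIntegral.integral_rpow_sub_one_mul_le {a b p : ℝ} (hab : a ≤ b) (hp : 1 < p)
    {f g : ℝ → ℝ} (hf : Continuous f) (hg : Continuous g) (hf₀ : 0 ≤ f) (hg₀ : 0 ≤ g) :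
    ∫ t in a..b, f t ^ (p - 1) * g t ≤
      (∫ t in a..b, f t ^ p) ^ ((p - 1) / p) * (∫ t in a..b, g t ^ p) ^ (1 / p) := by
  have hp₁ : p - 1 ≠ 0 := by linarith
  have hpow : ∀ t, (f t ^ (p - 1)) ^ (p / (p - 1)) = f t ^ p := fun t => by
    rw [← Real.rpow_mul (hf₀ t), mul_div_cancel₀ _ hp₁]
  have holder := integral_mul_le_Lp_mul_Lq_of_nonneg (p := p / (p - 1))
    (f := fun t => f t ^ (p - 1)) hab (Real.HolderConjugate.conjExponent hp).symm
    (hf.rpow_const fun _ => Or.inr (by linarith)) hg (fun t => Real.rpow_nonneg (hf₀ t) _) hg₀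
  simpa only [hpow, one_div_div] using holder

section Calculus

variable {H : Type*} [NormedAddCommGroup H] [InnerProductSpace ℝ H]

theorem HasDerivAt.norm_rpow {f : ℝ → H} {f' : H} {t : ℝ} (hf : HasDerivAt f f' t)
    (ht : f t ≠ 0) (β : ℝ) :
    HasDerivAt (fun s => ‖f s‖ ^ β) (β * ‖f t‖ ^ (β - 2) * ⟪f t, f'⟫) t := by
  have hsq_rpow : ∀ (x : H) (γ : ℝ), (‖x‖ ^ 2) ^ (γ / 2) = ‖x‖ ^ γ := fun x γ => by
    rw [← Real.rpow_natCast, ← Real.rpow_mul (norm_nonneg x)]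
    ring_nf
  have hsq := hf.norm_sq.rpow_const (p := β / 2) (Or.inl (by positivity))
  convert hsq using 1
  · simp only [hsq_rpow]
  · rw [show β / 2 - 1 = (β - 2) / 2 by ring, hsq_rpow]
    ring

theorem hasDerivAt_norm_rpow_mul_inner {ξ ξ' : ℝ → H} {ξ'' : H} {t : ℝ}
    (h₁ : HasDerivAt ξ (ξ' t) t) (h₂ : HasDerivAt ξ' ξ'' t) (ht : ξ t ≠ 0) (β : ℝ) :
    HasDerivAt (fun s => ‖ξ s‖ ^ β * ⟪ξ s, ξ' s⟫)
      (‖ξ t‖ ^ β * ‖ξ' t‖ ^ 2 + β * ‖ξ t‖ ^ (β - 2) * ⟪ξ t, ξ' t⟫ ^ 2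
        + ‖ξ t‖ ^ β * ⟪ξ t, ξ''⟫) t :=
  ((h₁.norm_rpow ht β).mul (h₁.inner ℝ h₂)).congr_deriv (by
    rw [real_inner_self_eq_norm_sq]; ring)

theorem integral_norm_rpow_mul_inner_neg_eq {ξ ξ' ξ'' : ℝ → H} {a b : ℝ}
    (h₁ : ∀ t, HasDerivAt ξ (ξ' t) t) (h₂ : ∀ t, HasDerivAt ξ' (ξ'' t) t)
    (hξ'' : Continuous ξ'') (hne : ∀ t, ξ t ≠ 0) (ha : ξ a = ξ b) (ha' : ξ' a = ξ' b)
    (β : ℝ) :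
    ∫ t in a..b, ‖ξ t‖ ^ β * ⟪ξ t, -ξ'' t⟫ =
      ∫ t in a..b, (‖ξ t‖ ^ β * ‖ξ' t‖ ^ 2 + β * ‖ξ t‖ ^ (β - 2) * ⟪ξ t, ξ' t⟫ ^ 2) := by
  have hξ : Continuous ξ := Differentiable.continuous fun t => (h₁ t).differentiableAt
  have hξ' : Continuous ξ' := Differentiable.continuous fun t => (h₂ t).differentiableAt
  have hpow : ∀ γ : ℝ, Continuous fun t => ‖ξ t‖ ^ γ := fun γ =>
    hξ.norm.rpow_const fun t => Or.inl (norm_ne_zero_iff.2 (hne t))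
  have hP : Continuous fun t => ‖ξ t‖ ^ β * ‖ξ' t‖ ^ 2 + β * ‖ξ t‖ ^ (β - 2) * ⟪ξ t, ξ' t⟫ ^ 2 :=
    by fun_prop
  have hQ : Continuous fun t => ‖ξ t‖ ^ β * ⟪ξ t, ξ'' t⟫ := by fun_prop
  have hboundary : ∫ t in a..b, (‖ξ t‖ ^ β * ‖ξ' t‖ ^ 2 + β * ‖ξ t‖ ^ (β - 2) * ⟪ξ t, ξ' t⟫ ^ 2
      + ‖ξ t‖ ^ β * ⟪ξ t, ξ'' t⟫) = 0 := by
    rw [integral_eq_sub_of_hasDerivAt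
      (fun t _ => hasDerivAt_norm_rpow_mul_inner (h₁ t) (h₂ t) (hne t) β)
      ((hP.add hQ).intervalIntegrable a b), ha, ha', sub_self]
  rw [integral_add (hP.intervalIntegrable a b) (hQ.intervalIntegrable a b)] at hboundary
  simp only [inner_neg_right, mul_neg, intervalIntegral.integral_neg]
  linarith

theorem integral_norm_rpow_mul_sq_le {ξ ξ' ξ'' : ℝ → H} {a b p : ℝ} (hab : a ≤ b) (hp : 2 ≤ p)
    (h₁ : ∀ t, HasDerivAt ξ (ξ' t) t) (h₂ : ∀ t, HasDerivAt ξ' (ξ'' t) t)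
    (hξ'' : Continuous ξ'') (hne : ∀ t, ξ t ≠ 0) (ha : ξ a = ξ b) (ha' : ξ' a = ξ' b) :
    ∫ t in a..b, ‖ξ t‖ ^ (p - 2) * ‖ξ' t‖ ^ 2 ≤ ∫ t in a..b, ‖ξ t‖ ^ (p - 1) * ‖ξ'' t‖ := by
  have hξ : Continuous ξ := Differentiable.continuous fun t => (h₁ t).differentiableAt
  have hξ' : Continuous ξ' := Differentiable.continuous fun t => (h₂ t).differentiableAt
  have hpow : ∀ γ : ℝ, Continuous fun t => ‖ξ t‖ ^ γ := fun γ =>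
    hξ.norm.rpow_const fun t => Or.inl (norm_ne_zero_iff.2 (hne t))
  calc ∫ t in a..b, ‖ξ t‖ ^ (p - 2) * ‖ξ' t‖ ^ 2
      ≤ ∫ t in a..b, (‖ξ t‖ ^ (p - 2) * ‖ξ' t‖ ^ 2
          + (p - 2) * ‖ξ t‖ ^ (p - 2 - 2) * ⟪ξ t, ξ' t⟫ ^ 2) := by
        refine integral_mono_on hab
          (Continuous.intervalIntegrable (by fun_prop) a b)
          (Continuous.intervalIntegrable (by fun_prop) a b) fun t _ => ?_
        have : 0 ≤ (p - 2) * ‖ξ t‖ ^ (p - 2 - 2) * ⟪ξ t, ξ' t⟫ ^ 2 := by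
          have := sub_nonneg.2 hp
          positivity
        linarith
    _ = ∫ t in a..b, ‖ξ t‖ ^ (p - 2) * ⟪ξ t, -ξ'' t⟫ :=
        (integral_norm_rpow_mul_inner_neg_eq h₁ h₂ hξ'' hne ha ha' (p - 2)).symm
    _ ≤ ∫ t in a..b, ‖ξ t‖ ^ (p - 1) * ‖ξ'' t‖ := by
        refine integral_mono_on hab
          (Continuous.intervalIntegrable (by fun_prop) a b)
          (Continuous.intervalIntegrable (by fun_prop) a b) fun t _ => ?_
        calc ‖ξ t‖ ^ (p - 2) * ⟪ξ t, -ξ'' t⟫ ≤ ‖ξ t‖ ^ (p - 2) * (‖ξ t‖ * ‖ξ'' t‖) := by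
              gcongr
              simpa using real_inner_le_norm (ξ t) (-ξ'' t)
          _ = ‖ξ t‖ ^ (p - 1) * ‖ξ'' t‖ := by
              rw [← mul_assoc, ← Real.rpow_add_one (norm_ne_zero_iff.2 (hne t))]
              ring_nf

end Calculus

/-- Hölder-type estimate for a nowhere vanishing smooth periodic curve `ξ` in a
real Hilbert space:
`∫_0^1 ‖ξ‖^{p-2}‖ξ'‖² ≤ (∫_0^1 ‖ξ‖^p)^{(p-1)/p} · (∫_0^1 ‖ξ''‖^p)^{1/p}`. -/
theorem periodic_lp_derivative_estimate
    {H : Type*} [NormedAddCommGroup H] [InnerProductSpace ℝ H]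
    (p : ℝ) (hp : 2 ≤ p) (ξ : ℝ → H)
    (hξ : ContDiff ℝ 2 ξ) (hper : Function.Periodic ξ 1)
    (hne : ∀ t, ξ t ≠ 0) :
    (∫ t in (0 : ℝ)..1, ‖ξ t‖ ^ (p - 2) * ‖deriv ξ t‖ ^ 2) ≤
      (∫ t in (0 : ℝ)..1, ‖ξ t‖ ^ p) ^ ((p - 1) / p) *
        (∫ t in (0 : ℝ)..1, ‖deriv (deriv ξ) t‖ ^ p) ^ (1 / p) := by
  have hξ' : ContDiff ℝ 1 (deriv ξ) := hξ.deriv' (n := 1)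
  have h₁ : ∀ t, HasDerivAt ξ (deriv ξ t) t := fun t =>
    (hξ.differentiable (by norm_num) t).hasDerivAt
  have h₂ : ∀ t, HasDerivAt (deriv ξ) (deriv (deriv ξ) t) t := fun t =>
    (hξ'.differentiable one_ne_zero t).hasDerivAt
  have hξ'' : Continuous (deriv (deriv ξ)) := hξ'.continuous_deriv le_rfl
  calc (∫ t in (0 : ℝ)..1, ‖ξ t‖ ^ (p - 2) * ‖deriv ξ t‖ ^ 2)
      ≤ ∫ t in (0 : ℝ)..1, ‖ξ t‖ ^ (p - 1) * ‖deriv (deriv ξ) t‖ :=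
        integral_norm_rpow_mul_sq_le zero_le_one hp h₁ h₂ hξ'' hne
          (by simpa using (hper 0).symm) (by simpa using (hper.deriv 0).symm)
    _ ≤ _ :=
        integral_rpow_sub_one_mul_le zero_le_one (by linarith) hξ.continuous.norm hξ''.norm
          (fun _ => norm_nonneg _) (fun _ => norm_nonneg _)
end
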